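/- arXiv:2210.09671 — 3 statements merged into one kernel-verified Lean document; each statement's English description precedes it below -/
import Mathlib

section
/- For a monotone submodular function F with F(∅)=0 and greedy iterates S_t, each greedy marginal gain satisfies F(S_{t+1}) − F(S_t) ≥ (1/k)(F(S*) − F(S_t)), where S* is any set of size at most k. -/
open scoped BigOperators

lemma telescope_aux {V : Type*} [Fintype V] [DecidableEq V]
    (F : Finset V → ℝ)
    (hmono : ∀ S T : Finset V, S ⊆ T → F S ≤ F T)
    (hsub : ∀ S T : Finset V, ∀ e : V, S ⊆ T → e ∉ T →
      F (insert e T) - F T ≤ F (insert e S) - F S)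
    (St : Finset V) (A : Finset V) :
    F (St ∪ A) ≤ F St + ∑ x ∈ A, (F (insert x St) - F St) := by
  induction A using Finset.induction_on with
  | empty => simp
  | @insert a A ha ih =>
    rw [Finset.sum_insert ha]
    have h1 : St ∪ insert a A = insert a (St ∪ A) := by
      ext x; simp [or_comm, or_left_comm]
    rw [h1]
    by_cases hmem : a ∈ St ∪ A
    · rw [Finset.insert_eq_self.mpr hmem]
      have : (0:ℝ) ≤ F (insert a St) - F St := by
        have := hmono St (insert a St) (Finset.subset_insert _ _); linarith
      linarith
    · have h2 := hsub St (St ∪ A) a Finset.subset_union_left hmem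
      linarith

/-- For a monotone submodular `F` with `F ∅ = 0`, each greedy marginal gain is at
least `(1/k)` of the remaining gap to any set `S*` of size at most `k`. -/
theorem greedy_marginal_gain
    {V : Type*} [Fintype V] [DecidableEq V] [Nonempty V]
    (F : Finset V → ℝ) (k : ℕ) (hk : 1 ≤ k)
    (hF0 : ∀ S, 0 ≤ F S)
    (hFempty : F ∅ = 0)
    (hmono : ∀ S T : Finset V, S ⊆ T → F S ≤ F T)
    (hsub : ∀ S T : Finset V, ∀ e : V, S ⊆ T → e ∉ T →
      F (insert e T) - F T ≤ F (insert e S) - F S)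
    (Sstar : Finset V) (hSstar : Sstar.card ≤ k)
    (St : Finset V) (e : V)
    (hmax : ∀ e' : V, F (insert e' St) ≤ F (insert e St)) :
    (1 / (k : ℝ)) * (F Sstar - F St) ≤ F (insert e St) - F St := by
  set M := F (insert e St) - F St with hM
  have hM0 : 0 ≤ M := by
    have := hmono St (insert e St) (Finset.subset_insert _ _); linarith
  have h1 : F Sstar ≤ F St + ∑ x ∈ Sstar, (F (insert x St) - F St) := by
    have := telescope_aux F hmono hsub St Sstar
    exact le_trans (hmono _ _ Finset.subset_union_right) this
  have h2 : ∑ x ∈ Sstar, (F (insert x St) - F St) ≤ Sstar.card * M := by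
    calc ∑ x ∈ Sstar, (F (insert x St) - F St) ≤ ∑ _x ∈ Sstar, M :=
          Finset.sum_le_sum (fun x _ => by have := hmax x; simp [hM]; linarith)
      _ = Sstar.card * M := by simp [mul_comm]
  have h3 : F Sstar - F St ≤ k * M := by
    have hcard : (Sstar.card : ℝ) ≤ k := by exact_mod_cast hSstar
    nlinarith
  have hkpos : (0:ℝ) < k := by exact_mod_cast hk
  rw [div_mul_eq_mul_div, one_mul, div_le_iff₀ hkpos]
  nlinarith
end

section
/- Suppose a β-smooth function L satisfies the μ-PL* condition and one gradient step is taken with an inexact gradient g = ∇L(θ) + e where ‖e‖ ≤ ρ and ‖∇L(θ)‖ ≤ ∇_max. Then with step size η ≤ 1/β, L(θ − ηg) ≤ (1 − ημ)L(θ) + (η/2)(ρ² + 2ρ∇_max). -/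
/-!
By the descent lemma, a step `x - η (∇f x + e)` with `βη ≤ 1` decreases `f` by at least
`(η/2)‖∇f x‖² - (η/2)‖e‖²`: the cross terms `⟪∇f x, e⟫` cancel. The PL* inequality turns
`(η/2)‖∇L θ‖²` into `ημ L θ`, and `‖e‖² ≤ ρ² ≤ ρ² + 2ρ∇max`.
-/

open Set

section

variable {E : Type*} [NormedAddCommGroup E] [InnerProductSpace ℝ E] [CompleteSpace E]
  {f : E → ℝ}

theorem hasDerivAt_comp_add_smul_gradient (hf : Differentiable ℝ f) (x v : E) (t : ℝ) :
    HasDerivAt (fun s : ℝ => f (x + s • v)) (inner ℝ (gradient f (x + t • v)) v) t := by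
  have hline : HasDerivAt (fun s : ℝ => x + s • v) v t := by
    simpa using ((hasDerivAt_id t).smul_const v).const_add x
  exact (hf (x + t • v)).hasGradientAt.hasFDerivAt.comp_hasDerivAt t hline

theorem descent_lemma {β : ℝ} (hf : Differentiable ℝ f)
    (hsmooth : ∀ x y, ‖gradient f x - gradient f y‖ ≤ β * ‖x - y‖) (x v : E) :
    f (x + v) ≤ f x + inner ℝ (gradient f x) v + β / 2 * ‖v‖ ^ 2 := by
  -- the claim is `φ 1 ≤ φ 0`, and `φ' ≤ 0` on `[0, ∞)` by the Lipschitz bound on the gradient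
  let φ : ℝ → ℝ := fun t => f (x + t • v) - t * inner ℝ (gradient f x) v - β / 2 * t ^ 2 * ‖v‖ ^ 2
  have hφ' : ∀ t, HasDerivAt φ
      (inner ℝ (gradient f (x + t • v) - gradient f x) v - β * t * ‖v‖ ^ 2) t := by
    intro t
    refine (((hasDerivAt_comp_add_smul_gradient hf x v t).sub ((hasDerivAt_id t).mul_const _)).sub
      (((hasDerivAt_pow 2 t).const_mul (β / 2)).mul_const (‖v‖ ^ 2))).congr_deriv ?_
    rw [inner_sub_left]; ring
  have hφ'_nonpos : ∀ t ∈ interior (Ici (0 : ℝ)),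
      inner ℝ (gradient f (x + t • v) - gradient f x) v - β * t * ‖v‖ ^ 2 ≤ 0 := by
    intro t ht
    rw [interior_Ici, mem_Ioi] at ht
    have hlip : ‖gradient f (x + t • v) - gradient f x‖ ≤ β * (t * ‖v‖) := by
      simpa [norm_smul, abs_of_pos ht] using hsmooth (x + t • v) x
    rw [sub_nonpos]
    calc inner ℝ (gradient f (x + t • v) - gradient f x) v
        ≤ ‖gradient f (x + t • v) - gradient f x‖ * ‖v‖ := real_inner_le_norm _ _
      _ ≤ β * (t * ‖v‖) * ‖v‖ := by gcongr
      _ = β * t * ‖v‖ ^ 2 := by ring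
  have hanti : AntitoneOn φ (Ici 0) :=
    antitoneOn_of_hasDerivWithinAt_nonpos (convex_Ici 0)
      (fun t _ => (hφ' t).continuousAt.continuousWithinAt)
      (fun t _ => (hφ' t).hasDerivWithinAt) hφ'_nonpos
  have h10 : φ 1 ≤ φ 0 := hanti self_mem_Ici (mem_Ici.2 zero_le_one) zero_le_one
  simp only [φ, zero_smul, one_smul, add_zero, zero_mul, one_mul, sub_zero, one_pow,
    ne_eq, OfNat.ofNat_ne_zero, not_false_eq_true, zero_pow, mul_zero] at h10
  linarith

theorem inexact_gradient_step_le {β η : ℝ} (hf : Differentiable ℝ f)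
    (hsmooth : ∀ x y, ‖gradient f x - gradient f y‖ ≤ β * ‖x - y‖)
    (hη : 0 ≤ η) (hβη : β * η ≤ 1) (x e : E) :
    f (x - η • (gradient f x + e)) ≤ f x - η / 2 * ‖gradient f x‖ ^ 2 + η / 2 * ‖e‖ ^ 2 := by
  have hdesc := descent_lemma hf hsmooth x (-(η • (gradient f x + e)))
  rw [← sub_eq_add_neg, inner_neg_right, inner_smul_right, norm_neg, norm_smul,
    Real.norm_of_nonneg hη, mul_pow] at hdesc
  have hstep : β * η ^ 2 * ‖gradient f x + e‖ ^ 2 ≤ η * ‖gradient f x + e‖ ^ 2 := by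
    gcongr
    nlinarith
  rw [inner_add_right, real_inner_self_eq_norm_sq, norm_add_sq_real] at hdesc
  rw [norm_add_sq_real] at hstep
  linarith

end

theorem inexact_gradient_step_bound_general
    {d : ℕ} (L : EuclideanSpace ℝ (Fin d) → ℝ)
    (μ β η ρ gmax : ℝ)
    (hdiff : Differentiable ℝ L)
    (hβ : 0 < β) (hη : 0 < η) (hηβ : η ≤ 1 / β)
    (hρ : 0 ≤ ρ) (hgmax' : 0 ≤ gmax)
    (hsmooth : ∀ x y, ‖gradient L x - gradient L y‖ ≤ β * ‖x - y‖)
    (hPL : ∀ θ, μ * L θ ≤ (1 / 2) * ‖gradient L θ‖ ^ 2)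
    (θ : EuclideanSpace ℝ (Fin d))
    (g e : EuclideanSpace ℝ (Fin d))
    (hg : g = gradient L θ + e)
    (he : ‖e‖ ≤ ρ) :
    L (θ - η • g) ≤ (1 - η * μ) * L θ + (η / 2) * (ρ ^ 2 + 2 * ρ * gmax) := by
  have hβη : β * η ≤ 1 := by rwa [le_div_iff₀ hβ, mul_comm] at hηβ
  have hPLθ : η * (μ * L θ) ≤ η * (1 / 2 * ‖gradient L θ‖ ^ 2) :=
    mul_le_mul_of_nonneg_left (hPL θ) hη.le
  have he2 : ‖e‖ ^ 2 ≤ ρ ^ 2 + 2 * ρ * gmax := by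
    have := pow_le_pow_left₀ (norm_nonneg e) he 2
    have := mul_nonneg hρ hgmax'
    linarith
  subst hg
  calc L (θ - η • (gradient L θ + e))
      ≤ L θ - η / 2 * ‖gradient L θ‖ ^ 2 + η / 2 * ‖e‖ ^ 2 :=
        inexact_gradient_step_le hdiff hsmooth hη.le hβη θ e
    _ ≤ (1 - η * μ) * L θ + (η / 2) * (ρ ^ 2 + 2 * ρ * gmax) := by
        linarith [mul_le_mul_of_nonneg_left he2 hη.le]

/-- One inexact gradient step on a nonnegative `β`-smooth `μ`-PL* function:
`L(θ - ηg) ≤ (1 - ημ) L(θ) + (η/2)(ρ² + 2ρ∇max)` when `g = ∇L(θ) + e`, `‖e‖ ≤ ρ`. -/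
theorem inexact_gradient_step_bound
    {d : ℕ} (L : EuclideanSpace ℝ (Fin d) → ℝ)
    (μ β η ρ gmax : ℝ)
    (hL0 : ∀ θ, 0 ≤ L θ)
    (hdiff : Differentiable ℝ L)
    (hμ : 0 < μ) (hβ : 0 < β) (hη : 0 < η) (hηβ : η ≤ 1 / β)
    (hρ : 0 ≤ ρ) (hgmax' : 0 ≤ gmax)
    (hsmooth : ∀ x y, ‖gradient L x - gradient L y‖ ≤ β * ‖x - y‖)
    (hPL : ∀ θ, μ * L θ ≤ (1 / 2) * ‖gradient L θ‖ ^ 2)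
    (θ : EuclideanSpace ℝ (Fin d))
    (g e : EuclideanSpace ℝ (Fin d))
    (hg : g = gradient L θ + e)
    (he : ‖e‖ ≤ ρ)
    (hgrad : ‖gradient L θ‖ ≤ gmax) :
    L (θ - η • g) ≤ (1 - η * μ) * L θ + (η / 2) * (ρ ^ 2 + 2 * ρ * gmax) :=
  inexact_gradient_step_bound_general L μ β η ρ gmax hdiff hβ hη hηβ hρ hgmax' hsmooth hPL θ g e hg
    he
end

section
/- If gradient descent θ_{t+1} = θ_t − η∇L(θ_t) is run on a β-smooth, μ-PL* function L ≥ 0 with η = 1/β, then Σ_{t=0}^{∞} ‖θ_{t+1} − θ_t‖ is finite; specifically, ‖θ_{t+1} − θ_t‖ ≤ η√(2βL(θ_0)) (1 − ημ)^{t/2}, so the iterates form a Cauchy sequence and converge. -/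
/-!
Smoothness gives the descent lemma, so a gradient step of length `1/β` lowers `L` by at least
`‖∇L‖² / (2β)`. Since `L ≥ 0`, this forces `‖∇L‖² ≤ 2βL`, and by PL* each step contracts `L` by the
factor `1 - μ/β`. Hence the steps `‖θ (t+1) - θ t‖ = ‖∇L (θ t)‖ / β` decay like `(1 - μ/β)^(t/2)`:
they are summable, so the iterates are Cauchy and converge in the complete space.
-/

section GradientDescent

variable {E : Type*} [NormedAddCommGroup E] [InnerProductSpace ℝ E] [CompleteSpace E]
  {L : E → ℝ} {β μ : ℝ}

/-- The descent lemma. The gap `φ` below is antitone on `[0, 1]` because the Lipschitz bound makes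
its derivative `⟪∇L (x + s • v) - ∇L x, v⟫ - β s ‖v‖²` nonpositive. -/
theorem apply_add_le_of_lipschitz_gradient (hdiff : Differentiable ℝ L)
    (hsmooth : ∀ x y, ‖gradient L x - gradient L y‖ ≤ β * ‖x - y‖) (x v : E) :
    L (x + v) ≤ L x + inner ℝ (gradient L x) v + β / 2 * ‖v‖ ^ 2 := by
  set φ : ℝ → ℝ := fun s => L (x + s • v) - s * inner ℝ (gradient L x) v - β / 2 * s ^ 2 * ‖v‖ ^ 2
  have hφ : ∀ s, HasDerivAt φ
      (inner ℝ (gradient L (x + s • v) - gradient L x) v - β * s * ‖v‖ ^ 2) s := by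
    intro s
    have hline : HasDerivAt (fun s : ℝ => x + s • v) v s := by
      simpa using ((hasDerivAt_id s).smul_const v).const_add x
    have hL : HasDerivAt (fun s : ℝ => L (x + s • v)) (inner ℝ (gradient L (x + s • v)) v) s := by
      simpa [InnerProductSpace.toDual_apply_apply, Function.comp_def] using
        (hdiff _).hasGradientAt.hasFDerivAt.comp_hasDerivAt s hline
    refine ((hL.sub ((hasDerivAt_id s).mul_const (inner ℝ (gradient L x) v))).sub
      (((hasDerivAt_pow 2 s).const_mul (β / 2)).mul_const (‖v‖ ^ 2))).congr_deriv ?_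
    simp only [inner_sub_left]
    ring
  have hanti : AntitoneOn φ (Set.Icc 0 1) := by
    refine antitoneOn_of_hasDerivWithinAt_nonpos (convex_Icc 0 1)
      (fun s _ => (hφ s).continuousAt.continuousWithinAt) (fun s _ => (hφ s).hasDerivWithinAt) ?_
    rintro s hs
    rw [interior_Icc] at hs
    have hnorm : ‖gradient L (x + s • v) - gradient L x‖ ≤ β * s * ‖v‖ := by
      simpa [norm_smul, abs_of_pos hs.1, mul_assoc] using hsmooth (x + s • v) x
    nlinarith [real_inner_le_norm (gradient L (x + s • v) - gradient L x) v, norm_nonneg v]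
  have h01 : φ 1 ≤ φ 0 := hanti (by simp) (by simp) zero_le_one
  simp only [φ, zero_smul, one_smul, add_zero, zero_mul, one_mul, sub_zero, one_pow,
    zero_pow two_ne_zero, mul_zero] at h01
  linarith

theorem apply_sub_gradient_le (hdiff : Differentiable ℝ L)
    (hsmooth : ∀ x y, ‖gradient L x - gradient L y‖ ≤ β * ‖x - y‖) (hβ : 0 < β) (x : E) :
    L (x - (1 / β) • gradient L x) ≤ L x - ‖gradient L x‖ ^ 2 / (2 * β) := by
  have h := apply_add_le_of_lipschitz_gradient hdiff hsmooth x (-((1 / β) • gradient L x))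
  rw [← sub_eq_add_neg, inner_neg_right, real_inner_smul_right, real_inner_self_eq_norm_sq,
    norm_neg, norm_smul, Real.norm_of_nonneg (by positivity)] at h
  convert h using 1
  field_simp
  ring

theorem sq_norm_gradient_le (hdiff : Differentiable ℝ L)
    (hsmooth : ∀ x y, ‖gradient L x - gradient L y‖ ≤ β * ‖x - y‖) (hβ : 0 < β)
    (hL0 : ∀ x, 0 ≤ L x) (x : E) :
    ‖gradient L x‖ ^ 2 ≤ 2 * β * L x := by
  have h : ‖gradient L x‖ ^ 2 / (2 * β) ≤ L x := by
    linarith [apply_sub_gradient_le hdiff hsmooth hβ x, hL0 (x - (1 / β) • gradient L x)]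
  rwa [div_le_iff₀ (by positivity), mul_comm] at h

theorem apply_sub_gradient_le_mul_of_pl (hdiff : Differentiable ℝ L)
    (hsmooth : ∀ x y, ‖gradient L x - gradient L y‖ ≤ β * ‖x - y‖) (hβ : 0 < β)
    (hPL : ∀ x, μ * L x ≤ 1 / 2 * ‖gradient L x‖ ^ 2) (x : E) :
    L (x - (1 / β) • gradient L x) ≤ (1 - 1 / β * μ) * L x := by
  have hstep := apply_sub_gradient_le hdiff hsmooth hβ x
  have : 1 / β * μ * L x ≤ ‖gradient L x‖ ^ 2 / (2 * β) := by
    rw [mul_assoc, div_mul_eq_mul_div, one_mul, div_le_div_iff₀ hβ (by positivity)]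
    nlinarith [hPL x]
  linarith

theorem apply_gradient_descent_le_geometric (hdiff : Differentiable ℝ L)
    (hsmooth : ∀ x y, ‖gradient L x - gradient L y‖ ≤ β * ‖x - y‖) (hβ : 0 < β)
    (hr : 0 ≤ 1 - 1 / β * μ) (hPL : ∀ x, μ * L x ≤ 1 / 2 * ‖gradient L x‖ ^ 2) {θ : ℕ → E}
    (hstep : ∀ t, θ (t + 1) = θ t - (1 / β) • gradient L (θ t)) (t : ℕ) :
    L (θ t) ≤ (1 - 1 / β * μ) ^ t * L (θ 0) := by
  refine le_geom (u := fun t => L (θ t)) hr t fun k _ => ?_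
  rw [hstep k]
  exact apply_sub_gradient_le_mul_of_pl hdiff hsmooth hβ hPL (θ k)

theorem norm_gradient_descent_step_le (hdiff : Differentiable ℝ L)
    (hsmooth : ∀ x y, ‖gradient L x - gradient L y‖ ≤ β * ‖x - y‖) (hβ : 0 < β)
    (hr : 0 ≤ 1 - 1 / β * μ) (hL0 : ∀ x, 0 ≤ L x)
    (hPL : ∀ x, μ * L x ≤ 1 / 2 * ‖gradient L x‖ ^ 2) {θ : ℕ → E}
    (hstep : ∀ t, θ (t + 1) = θ t - (1 / β) • gradient L (θ t)) (t : ℕ) :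
    ‖θ (t + 1) - θ t‖ ≤ 1 / β * √(2 * β * L (θ 0)) * √((1 - 1 / β * μ) ^ t) := by
  have hnorm_grad : ‖gradient L (θ t)‖ ≤ √(2 * β * L (θ t)) :=
    Real.le_sqrt_of_sq_le (sq_norm_gradient_le hdiff hsmooth hβ hL0 (θ t))
  have hloss : 2 * β * L (θ t) ≤ 2 * β * L (θ 0) * (1 - 1 / β * μ) ^ t := by
    have := apply_gradient_descent_le_geometric hdiff hsmooth hβ hr hPL hstep t
    rw [mul_assoc _ (L (θ 0)), mul_comm (L (θ 0))]
    gcongr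
  calc ‖θ (t + 1) - θ t‖ = 1 / β * ‖gradient L (θ t)‖ := by
        rw [hstep t, sub_sub_cancel_left, norm_neg, norm_smul, Real.norm_of_nonneg (by positivity)]
    _ ≤ 1 / β * √(2 * β * L (θ t)) := by gcongr
    _ ≤ 1 / β * (√(2 * β * L (θ 0)) * √((1 - 1 / β * μ) ^ t)) := by
        rw [← Real.sqrt_mul (by have := hL0 (θ 0); positivity)]
        gcongr
    _ = 1 / β * √(2 * β * L (θ 0)) * √((1 - 1 / β * μ) ^ t) := by ring

end GradientDescent

theorem Real.summable_sqrt_pow {r : ℝ} (hr0 : 0 ≤ r) (hr1 : r < 1) :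
    Summable fun t : ℕ => √(r ^ t) := by
  have hpow : ∀ t : ℕ, √(r ^ t) = √r ^ t := fun t => by
    rw [← Real.sqrt_sq (pow_nonneg (Real.sqrt_nonneg r) t), ← pow_mul, mul_comm, pow_mul,
      Real.sq_sqrt hr0]
  simp only [hpow]
  exact summable_geometric_of_lt_one (Real.sqrt_nonneg r)
    ((Real.sqrt_lt_sqrt hr0 hr1).trans_eq Real.sqrt_one)

/-- On a nonnegative `β`-smooth `μ`-PL* function, exact gradient descent with
`η = 1/β` has geometrically decaying step lengths, summable steps, hence the
iterates form a Cauchy sequence and converge. -/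
theorem pl_gd_iterates_converge
    {d : ℕ} (L : EuclideanSpace ℝ (Fin d) → ℝ)
    (μ β η : ℝ)
    (hL0 : ∀ θ, 0 ≤ L θ)
    (hdiff : Differentiable ℝ L)
    (hμ : 0 < μ) (hβ : 0 < β) (hμβ : μ ≤ β)
    (hη : η = 1 / β)
    (hsmooth : ∀ x y, ‖gradient L x - gradient L y‖ ≤ β * ‖x - y‖)
    (hPL : ∀ θ, μ * L θ ≤ (1 / 2) * ‖gradient L θ‖ ^ 2)
    (θ : ℕ → EuclideanSpace ℝ (Fin d))
    (hstep : ∀ t, θ (t + 1) = θ t - η • gradient L (θ t)) :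
    (∀ t, ‖θ (t + 1) - θ t‖ ≤
        η * Real.sqrt (2 * β * L (θ 0)) * Real.sqrt ((1 - η * μ) ^ t)) ∧
    Summable (fun t => ‖θ (t + 1) - θ t‖) ∧
    CauchySeq θ ∧
    ∃ θlim, Filter.Tendsto θ Filter.atTop (nhds θlim) := by
  subst hη
  have hr0 : 0 ≤ 1 - 1 / β * μ := by
    rw [sub_nonneg, one_div_mul_eq_div]
    exact div_le_one_of_le₀ hμβ hβ.le
  have hstep_bound := norm_gradient_descent_step_le hdiff hsmooth hβ hr0 hL0 hPL hstep
  have hr1 : 1 - 1 / β * μ < 1 := sub_lt_self 1 (by positivity)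
  have hsum : Summable fun t => ‖θ (t + 1) - θ t‖ :=
    ((Real.summable_sqrt_pow hr0 hr1).mul_left _).of_nonneg_of_le
      (fun _ => norm_nonneg _) hstep_bound
  have hcauchy : CauchySeq θ :=
    cauchySeq_of_summable_dist (by simpa only [dist_eq_norm, norm_sub_rev] using hsum)
  exact ⟨hstep_bound, hsum, hcauchy, cauchySeq_tendsto_of_complete hcauchy⟩
end
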